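/- arXiv:1911.10523 — 2 statements merged into one kernel-verified Lean document; each statement's English description precedes it below -/
import Mathlib

section
/- Let ℓ > 0, let Q^ℓ = [0, ℓ]², and let ρ : Q^ℓ → ℝ be Lipschitz continuous with Lipschitz constant L and satisfying ρ(x) ≥ a > 0 for all x ∈ Q^ℓ. Define r(x) = ρ(x) / ∫_{Q^ℓ} ρ and r₂(x₂) = ∫_0^ℓ r(x₁', x₂) dx₁'. Then for all x ∈ Q^ℓ, |r(x) − ℓ^{-2}| ≤ √2 · L/(a ℓ), and for all x₂ ∈ [0, ℓ], |r₂(x₂) − ℓ^{-1}| ≤ √2 · L/a. -/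
open MeasureTheory Filter
open scoped ENNReal NNReal Topology

noncomputable section

/-- The plane, with the Euclidean norm. -/
abbrev E2 : Type := EuclideanSpace ℝ (Fin 2)

/-- The point of `ℝ²` with coordinates `(s, t)`. -/
def mk2 (s t : ℝ) : E2 := (WithLp.equiv 2 (Fin 2 → ℝ)).symm ![s, t]

/-- The square `Q^ℓ = [0,ℓ]²`. -/
def sqSet (ℓ : ℝ) : Set E2 := {x | ∀ i, x i ∈ Set.Icc (0 : ℝ) ℓ}

/-! Over the square, whose diameter is `√2 ℓ`, the density `ρ` oscillates by at most `√2 L ℓ`,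
so `ρ(x) ℓ²` lies within `√2 L ℓ³` of `∫ρ ≥ a ℓ²`; dividing by `ℓ² ∫ρ` gives the pointwise bound
on `r`, and integrating that bound along a horizontal segment of length `ℓ` gives the one on
`r₂`. -/

section SetAverage

variable {X : Type*} [MeasurableSpace X] {μ : Measure X} {s : Set X} {f : X → ℝ}

theorem abs_setIntegral_sub_mul_le {c C : ℝ} (hμ : μ s < ∞) (hf : IntegrableOn f s μ)
    (h : ∀ y ∈ s, |f y - c| ≤ C) : |∫ y in s, f y ∂μ - μ.real s * c| ≤ C * μ.real s := by
  have hsub : ∫ y in s, (f y - c) ∂μ = ∫ y in s, f y ∂μ - μ.real s * c := by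
    rw [integral_sub hf (integrableOn_const hμ.ne), setIntegral_const, smul_eq_mul]
  rw [← hsub, ← Real.norm_eq_abs]
  exact norm_setIntegral_le_of_norm_le_const hμ h

theorem abs_div_setIntegral_sub_inv_le [PseudoMetricSpace X] {K : ℝ≥0} {a D : ℝ}
    (hs : MeasurableSet s) (hμ : μ s < ∞) (hμpos : 0 < μ.real s) (hf : LipschitzOnWith K f s)
    (hint : IntegrableOn f s μ) (ha : 0 < a) (hfa : ∀ y ∈ s, a ≤ f y)
    (hD : ∀ x ∈ s, ∀ y ∈ s, dist x y ≤ D) {x : X} (hx : x ∈ s) :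
    |f x / ∫ y in s, f y ∂μ - (μ.real s)⁻¹| ≤ K * D / (a * μ.real s) := by
  set I := ∫ y in s, f y ∂μ
  set V := μ.real s
  have hI : a * V ≤ I := setIntegral_ge_of_const_le_real hs hμ.ne hfa hint
  have hIpos : 0 < I := lt_of_lt_of_le (by positivity) hI
  have hD0 : 0 ≤ D := (dist_self x).symm.le.trans (hD x hx x hx)
  have hosc : |I - V * f x| ≤ K * D * V :=
    abs_setIntegral_sub_mul_le hμ hint fun y hy => by
      rw [← Real.dist_eq]
      exact (hf.dist_le_mul y hy x hx).trans (by gcongr; exact hD y hy x hx)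
  calc |f x / I - V⁻¹| = |I - V * f x| / (I * V) := by
        rw [show f x / I - V⁻¹ = -((I - V * f x) / (I * V)) by field_simp; ring, abs_neg, abs_div,
          abs_of_pos (mul_pos hIpos hμpos)]
    _ ≤ K * D * V / (a * V * V) := by gcongr
    _ = K * D / (a * V) := by field_simp

end SetAverage

section Square

theorem sqSet_eq_preimage (ℓ : ℝ) :
    sqSet ℓ = WithLp.ofLp ⁻¹' Set.univ.pi fun _ : Fin 2 => Set.Icc (0 : ℝ) ℓ := by
  ext x
  exact Set.mem_univ_pi.symm

theorem isCompact_sqSet (ℓ : ℝ) : IsCompact (sqSet ℓ) := by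
  rw [sqSet_eq_preimage]
  exact (PiLp.homeomorph 2 _).isCompact_preimage.2 (isCompact_univ_pi fun _ => isCompact_Icc)

theorem volume_real_sqSet {ℓ : ℝ} (hℓ : 0 ≤ ℓ) : volume.real (sqSet ℓ) = ℓ ^ 2 := by
  have hmeas : NullMeasurableSet (sqSet ℓ) :=
    (isCompact_sqSet ℓ).isClosed.measurableSet.nullMeasurableSet
  have hpres := (EuclideanSpace.volume_preserving_symm_measurableEquiv_toLp (Fin 2)).symm
  rw [← hpres.measureReal_preimage hmeas, sqSet_eq_preimage]
  change volume.real (Set.univ.pi fun _ : Fin 2 => Set.Icc (0 : ℝ) ℓ) = ℓ ^ 2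
  rw [measureReal_def, volume_pi_pi]
  simp [Real.volume_Icc, hℓ, sq]

theorem dist_le_of_mem_sqSet {ℓ : ℝ} (hℓ : 0 ≤ ℓ) {x y : E2} (hx : x ∈ sqSet ℓ)
    (hy : y ∈ sqSet ℓ) : dist x y ≤ √2 * ℓ := by
  have hcoord : ∀ i, dist (x i) (y i) ^ 2 ≤ ℓ ^ 2 := fun i => by
    gcongr
    simpa using Real.dist_le_of_mem_Icc (hx i) (hy i)
  calc dist x y = √(∑ i, dist (x i) (y i) ^ 2) := EuclideanSpace.dist_eq x y
    _ ≤ √(∑ _i : Fin 2, ℓ ^ 2) := Real.sqrt_le_sqrt (Finset.sum_le_sum fun i _ => hcoord i)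
    _ = √2 * ℓ := by simp [Real.sqrt_mul, Real.sqrt_sq hℓ]

theorem mk2_mem_sqSet {ℓ s t : ℝ} (hs : s ∈ Set.Icc 0 ℓ) (ht : t ∈ Set.Icc 0 ℓ) :
    mk2 s t ∈ sqSet ℓ := by
  intro i
  fin_cases i
  · exact hs
  · exact ht

theorem continuous_mk2_left (t : ℝ) : Continuous fun s => mk2 s t :=
  (PiLp.homeomorph 2 _).symm.continuous.comp (continuous_pi fun i => by fin_cases i <;> fun_prop)

end Square

/-- For an `L`-Lipschitz density `ρ ≥ a > 0` on `Q^ℓ = [0,ℓ]²`, the normalized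
density `r = ρ/∫ρ` satisfies `|r(x) − ℓ⁻²| ≤ √2 L/(aℓ)`, and its first marginal
`r₂(x₂) = ∫_0^ℓ r(x₁', x₂) dx₁'` satisfies `|r₂(x₂) − ℓ⁻¹| ≤ √2 L/a`. -/
theorem normalized_density_estimates
    (ℓ : ℝ) (hℓ : 0 < ℓ) (ρ : E2 → ℝ) (L : ℝ≥0) (a : ℝ) (ha : 0 < a)
    (hlip : LipschitzOnWith L ρ (sqSet ℓ))
    (hpos : ∀ x ∈ sqSet ℓ, a ≤ ρ x)
    (r : E2 → ℝ) (hr : r = fun x => ρ x / ∫ y in sqSet ℓ, ρ y)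
    (r₂ : ℝ → ℝ)
    (hr₂ : r₂ = fun x₂ => ∫ x₁' in Set.Icc (0 : ℝ) ℓ, r (mk2 x₁' x₂)) :
    (∀ x ∈ sqSet ℓ, |r x - (ℓ ^ 2)⁻¹| ≤ Real.sqrt 2 * L / (a * ℓ)) ∧
    (∀ x₂ ∈ Set.Icc (0 : ℝ) ℓ, |r₂ x₂ - ℓ⁻¹| ≤ Real.sqrt 2 * L / a) := by
  have hQ := isCompact_sqSet ℓ
  have hV := volume_real_sqSet hℓ.le
  have hr_le : ∀ x ∈ sqSet ℓ, |r x - (ℓ ^ 2)⁻¹| ≤ Real.sqrt 2 * L / (a * ℓ) := by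
    intro x hx
    have h := abs_div_setIntegral_sub_inv_le hQ.isClosed.measurableSet hQ.measure_lt_top
      (by rw [hV]; positivity) hlip (hlip.continuousOn.integrableOn_compact hQ) ha hpos
      (fun _ hx _ hy => dist_le_of_mem_sqSet hℓ.le hx hy) hx
    rw [hV] at h
    convert h using 1
    · simp [hr]
    · field_simp
  refine ⟨hr_le, fun x₂ hx₂ => ?_⟩
  have hline : ∀ s ∈ Set.Icc 0 ℓ, mk2 s x₂ ∈ sqSet ℓ := fun s hs => mk2_mem_sqSet hs hx₂
  have hr_int : IntegrableOn (fun s => r (mk2 s x₂)) (Set.Icc 0 ℓ) := by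
    rw [hr]
    exact ((hlip.continuousOn.comp (continuous_mk2_left x₂).continuousOn hline).div_const _
      ).integrableOn_compact isCompact_Icc
  have h := abs_setIntegral_sub_mul_le measure_Icc_lt_top hr_int fun s hs => hr_le _ (hline s hs)
  rw [Real.volume_real_Icc_of_le hℓ.le, sub_zero] at h
  rw [hr₂]
  convert h using 2 <;> field_simp
end
end

section
/- Let ρ : Q → ℝ be a bounded, strictly positive probability density on the unit square Q = [0,1]² and let μ = ρ dx. Fix a positive integer m and partition Q into the m² closed squares Q_k of side 1/m of the regular grid; set p_k = ∫_{Q_k} ρ(x) dx > 0. Sample N points x_1,…,x_N independently with distribution μ, let R_k be the number of sampled points in Q_k, and let μ^m be the (random) measure on Q with density f^m(x) = Σ_k (R_k/(p_k N)) ρ(x) 1_{Q_k}(x). Then E_μ[ ∫_Q (f^m(x) − ρ(x))² dx ] ≤ ‖ρ‖_∞ · m² / N. -/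
/-!
On a grid square `Q_k` the random density is `f^m = (R_k / (p_k N)) ρ`, so
`∫_Q (f^m - ρ)² = Σ_k (R_k / (p_k N) - 1)² ∫_{Q_k} ρ²` and `∫_{Q_k} ρ² ≤ ‖ρ‖_∞ p_k`.
The count `R_k` is a sum of `N` independent Bernoulli variables of mean `p_k`, so
`E[(R_k - N p_k)²] = Var R_k ≤ N p_k`, and each of the `m²` squares contributes at most
`‖ρ‖_∞ / N`.
-/

open MeasureTheory Filter
open scoped ENNReal NNReal Topology Classical

noncomputable section

/-- The unit square `Q = [0,1]²`. -/
def unitSq : Set E2 := {x | ∀ i, x i ∈ Set.Icc (0 : ℝ) 1}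

/-- The square of the regular `m × m` grid with index `k = (i, j)`:
points are assigned to a unique square via half-open intervals. -/
def gridSq (m : ℕ) (k : Fin m × Fin m) : Set E2 :=
  {x | x 0 ∈ Set.Ico ((k.1 : ℝ) / m) (((k.1 : ℝ) + 1) / m) ∧
       x 1 ∈ Set.Ico ((k.2 : ℝ) / m) (((k.2 : ℝ) + 1) / m)}

section Sampling

open ProbabilityTheory

variable {α : Type*} {N : ℕ}

def sampleCount (s : Set α) (ω : Fin N → α) : ℕ := (Finset.univ.filter fun i => ω i ∈ s).card

lemma sampleCount_eq_sum_indicator (s : Set α) (ω : Fin N → α) :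
    (sampleCount s ω : ℝ) = ∑ i, s.indicator 1 (ω i) := by
  rw [sampleCount, Finset.card_filter]
  push_cast
  rfl

variable [MeasurableSpace α] {μ : Measure α} [IsProbabilityMeasure μ] {s : Set α}

lemma memLp_indicator_one (hs : MeasurableSet s) (p : ℝ≥0∞) :
    MemLp (s.indicator (1 : α → ℝ)) p μ :=
  memLp_indicator_const p hs (1 : ℝ) (Or.inr (measure_ne_top μ s))

lemma memLp_indicator_one_comp_eval (hs : MeasurableSet s) (p : ℝ≥0∞) (i : Fin N) :
    MemLp (fun ω : Fin N → α => s.indicator (1 : α → ℝ) (ω i)) p (Measure.pi fun _ => μ) :=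
  (memLp_indicator_one hs p).comp_measurePreserving (measurePreserving_eval _ i)

lemma memLp_sampleCount (hs : MeasurableSet s) (p : ℝ≥0∞) :
    MemLp (fun ω : Fin N → α => (sampleCount s ω : ℝ)) p (Measure.pi fun _ => μ) := by
  simp_rw [sampleCount_eq_sum_indicator]
  exact memLp_finsetSum _ fun i _ => memLp_indicator_one_comp_eval hs p i

lemma integral_sampleCount (hs : MeasurableSet s) :
    ∫ ω, (sampleCount s ω : ℝ) ∂(Measure.pi fun _ : Fin N => μ) = N * μ.real s := by
  simp_rw [sampleCount_eq_sum_indicator]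
  rw [integral_finsetSum _ fun i _ => (memLp_indicator_one_comp_eval hs 1 i).integrable le_rfl]
  have hi : ∀ i : Fin N, ∫ ω, s.indicator (1 : α → ℝ) (ω i) ∂(Measure.pi fun _ => μ)
      = μ.real s := fun i => by
    rw [integral_comp_eval (aestronglyMeasurable_one.indicator hs), integral_indicator_one hs]
  simp [hi]

lemma variance_indicator_one_le (hs : MeasurableSet s) :
    Var[s.indicator (1 : α → ℝ); μ] ≤ μ.real s := by
  have h01 : ∀ᵐ x ∂μ, s.indicator (1 : α → ℝ) x ∈ Set.Icc 0 1 :=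
    ae_of_all _ fun x => by by_cases hx : x ∈ s <;> simp [hx]
  have := variance_le_sub_mul_sub h01 ((measurable_one.indicator hs).aemeasurable)
  rw [integral_indicator_one hs] at this
  nlinarith [measureReal_nonneg (μ := μ) (s := s), measureReal_le_one (μ := μ) (s := s)]

lemma variance_sampleCount_le (hs : MeasurableSet s) :
    Var[fun ω => (sampleCount s ω : ℝ); Measure.pi fun _ : Fin N => μ] ≤ N * μ.real s := by
  have hsum : (fun ω : Fin N → α => (sampleCount s ω : ℝ))
      = ∑ i, fun ω => s.indicator 1 (ω i) := by
    ext ω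
    simp [sampleCount_eq_sum_indicator]
  rw [hsum, variance_sum_pi fun _ => memLp_indicator_one hs 2]
  simpa using Finset.sum_le_sum fun (i : Fin N) (_ : i ∈ Finset.univ) =>
    variance_indicator_one_le (μ := μ) hs

lemma integral_sq_sampleCount_div_sub_one_le (hs : MeasurableSet s) (hps : 0 < μ.real s)
    (hN : 0 < N) :
    ∫ ω, ((sampleCount s ω : ℝ) / (μ.real s * N) - 1) ^ 2 ∂(Measure.pi fun _ : Fin N => μ)
      ≤ 1 / (μ.real s * N) := by
  have hpN : 0 < μ.real s * N := mul_pos hps (by exact_mod_cast hN)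
  have hsq : ∀ ω : Fin N → α, ((sampleCount s ω : ℝ) / (μ.real s * N) - 1) ^ 2
      = ((sampleCount s ω : ℝ) - N * μ.real s) ^ 2 / (μ.real s * N) ^ 2 := fun ω => by
    field_simp
  simp_rw [hsq]
  rw [integral_div, ← integral_sampleCount hs,
    ← variance_eq_integral (memLp_sampleCount hs 1).aemeasurable,
    div_le_div_iff₀ (by positivity) hpN]
  calc _ ≤ (N * μ.real s) * (μ.real s * N) := by gcongr; exact variance_sampleCount_le hs
    _ = 1 * (μ.real s * N) ^ 2 := by ring

lemma integral_sum_sq_sampleCount_div_sub_one_mul_le {ι : Type*} [Fintype ι] {S : ι → Set α}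
    (hS : ∀ k, MeasurableSet (S k)) (hSpos : ∀ k, 0 < μ.real (S k)) {c : ι → ℝ} {M : ℝ}
    (hc0 : ∀ k, 0 ≤ c k) (hcM : ∀ k, c k ≤ M * μ.real (S k)) (hN : 0 < N) :
    ∫ ω, ∑ k, ((sampleCount (S k) ω : ℝ) / (μ.real (S k) * N) - 1) ^ 2 * c k
        ∂(Measure.pi fun _ : Fin N => μ) ≤ Fintype.card ι * M / N := by
  have hint : ∀ k, Integrable (fun ω : Fin N → α =>
      ((sampleCount (S k) ω : ℝ) / (μ.real (S k) * N) - 1) ^ 2) (Measure.pi fun _ => μ) :=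
    fun k => by
      simpa only [div_eq_mul_inv, Pi.sub_apply] using (((memLp_sampleCount (hS k) 2).mul_const
        (μ.real (S k) * N)⁻¹).sub (memLp_const 1)).integrable_sq
  rw [integral_finsetSum _ fun k _ => (hint k).mul_const _]
  calc _ ≤ ∑ _k : ι, M / N := Finset.sum_le_sum fun k _ => ?_
    _ = _ := by simp [mul_div_assoc]
  rw [integral_mul_const]
  have hpN : 0 < μ.real (S k) * N := mul_pos (hSpos k) (by exact_mod_cast hN)
  calc _ ≤ 1 / (μ.real (S k) * N) * (M * μ.real (S k)) :=
        mul_le_mul (integral_sq_sampleCount_div_sub_one_le (hS k) (hSpos k) hN) (hcM k) (hc0 k)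
          (by positivity)
    _ = M / N := by field_simp [(hSpos k).ne']

end Sampling

section Partition

open Function

variable {X ι : Type*} [Fintype ι] {S : ι → Set X}

lemma sum_mul_indicator_of_mem (hdisj : Pairwise (Disjoint on S)) (a : ι → ℝ) (ρ : X → ℝ)
    {k : ι} {x : X} (hx : x ∈ S k) : ∑ j, a j * (S j).indicator ρ x = a k * ρ x := by
  rw [Finset.sum_eq_single k (fun j _ hjk => ?_) (by simp), Set.indicator_of_mem hx]
  rw [Set.indicator_of_notMem (Set.disjoint_right.1 (hdisj hjk) hx), mul_zero]

variable [MeasurableSpace X] {ν : Measure X}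

lemma setIntegral_sq_sum_mul_indicator_sub (hS : ∀ k, MeasurableSet (S k))
    (hdisj : Pairwise (Disjoint on S)) {U : Set X} (hU : U =ᵐ[ν] ⋃ k, S k) {ρ : X → ℝ}
    (hρ : ∀ k, IntegrableOn (fun x => ρ x ^ 2) (S k) ν) (a : ι → ℝ) :
    ∫ x in U, (∑ k, a k * (S k).indicator ρ x - ρ x) ^ 2 ∂ν
      = ∑ k, (a k - 1) ^ 2 * ∫ x in S k, ρ x ^ 2 ∂ν := by
  have heq : ∀ k, Set.EqOn (fun x => (∑ j, a j * (S j).indicator ρ x - ρ x) ^ 2)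
      (fun x => (a k - 1) ^ 2 * ρ x ^ 2) (S k) := fun k x hx => by
    simp only [sum_mul_indicator_of_mem hdisj a ρ hx]
    ring
  rw [setIntegral_congr_set hU,
    integral_iUnion_fintype hS hdisj fun k =>
      IntegrableOn.congr_fun ((hρ k).const_mul _) (heq k).symm (hS k)]
  exact Finset.sum_congr rfl fun k _ => by
    rw [setIntegral_congr_fun (hS k) (heq k), integral_const_mul]

end Partition

section Density

variable {X : Type*} [MeasurableSpace X] {ν : Measure X} {S : Set X} {ρ : X → ℝ} {M : ℝ}

lemma measureReal_withDensity_ofReal_of_subset {U : Set X} (hS : MeasurableSet S) (hSU : S ⊆ U)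
    (hρ : IntegrableOn ρ S ν) (hρ0 : ∀ x ∈ S, 0 ≤ ρ x) :
    ((ν.restrict U).withDensity fun x => ENNReal.ofReal (ρ x)).real S = ∫ x in S, ρ x ∂ν := by
  rw [measureReal_def, withDensity_apply _ hS, Measure.restrict_restrict hS,
    Set.inter_eq_self_of_subset_left hSU, ← ofReal_integral_eq_lintegral_ofReal hρ
      ((ae_restrict_iff' hS).2 (ae_of_all _ hρ0)), ENNReal.toReal_ofReal
      (setIntegral_nonneg hS hρ0)]

lemma integrableOn_sq_of_le (hS : MeasurableSet S) (hρ : IntegrableOn ρ S ν)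
    (hρ0 : ∀ x ∈ S, 0 ≤ ρ x) (hρM : ∀ x ∈ S, ρ x ≤ M) :
    IntegrableOn (fun x => ρ x ^ 2) S ν := by
  refine (hρ.const_mul M).mono' (hρ.1.pow 2) ((ae_restrict_iff' hS).2 (ae_of_all _ fun x hx => ?_))
  rw [Real.norm_of_nonneg (sq_nonneg _), sq]
  exact mul_le_mul_of_nonneg_right (hρM x hx) (hρ0 x hx)

lemma setIntegral_sq_le_mul (hS : MeasurableSet S) (hρ : IntegrableOn ρ S ν)
    (hρ0 : ∀ x ∈ S, 0 ≤ ρ x) (hρM : ∀ x ∈ S, ρ x ≤ M) :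
    ∫ x in S, ρ x ^ 2 ∂ν ≤ M * ∫ x in S, ρ x ∂ν := by
  rw [← integral_const_mul]
  refine setIntegral_mono_on (integrableOn_sq_of_le hS hρ hρ0 hρM) (hρ.const_mul M) hS
    fun x hx => ?_
  rw [sq]
  exact mul_le_mul_of_nonneg_right (hρM x hx) (hρ0 x hx)

lemma setIntegral_pos_of_pos (hS : MeasurableSet S) (hνS : 0 < ν S) (hρ : IntegrableOn ρ S ν)
    (hρ0 : ∀ x ∈ S, 0 < ρ x) : 0 < ∫ x in S, ρ x ∂ν := by
  refine (setIntegral_pos_iff_support_of_nonneg_ae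
    ((ae_restrict_iff' hS).2 (ae_of_all _ fun x hx => (hρ0 x hx).le)) hρ).2 ?_
  exact hνS.trans_le (measure_mono fun x hx => ⟨(hρ0 x hx).ne', hx⟩)

end Density

section Grid

open Function

lemma mem_Ico_div_iff_floor_eq {m a : ℕ} (hm : 0 < m) {t : ℝ} (ht : 0 ≤ t) :
    t ∈ Set.Ico ((a : ℝ) / m) ((a + 1) / m) ↔ ⌊t * m⌋₊ = a := by
  have hm' : (0 : ℝ) < m := by exact_mod_cast hm
  rw [Nat.floor_eq_iff (by positivity), Set.mem_Ico, div_le_iff₀ hm', lt_div_iff₀ hm']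

lemma mem_Icc_of_mem_Ico_div {m : ℕ} (a : Fin m) {t : ℝ}
    (ht : t ∈ Set.Ico ((a : ℝ) / m) ((a + 1) / m)) : t ∈ Set.Icc (0 : ℝ) 1 := by
  have hm : (0 : ℝ) < m := by exact_mod_cast a.pos
  have ha : (a : ℝ) + 1 ≤ m := by exact_mod_cast a.2
  exact ⟨le_trans (by positivity) ht.1, ht.2.le.trans ((div_le_one hm).2 ha)⟩

lemma Fin.eq_of_mem_Ico_div {m : ℕ} {a b : Fin m} {t : ℝ}
    (ha : t ∈ Set.Ico ((a : ℝ) / m) ((a + 1) / m))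
    (hb : t ∈ Set.Ico ((b : ℝ) / m) ((b + 1) / m)) : a = b := by
  have ht := (mem_Icc_of_mem_Ico_div a ha).1
  exact Fin.ext <| ((mem_Ico_div_iff_floor_eq a.pos ht).1 ha).symm.trans
    ((mem_Ico_div_iff_floor_eq a.pos ht).1 hb)

lemma exists_fin_mem_Ico_div {m : ℕ} (hm : 0 < m) {t : ℝ} (ht : t ∈ Set.Ico (0 : ℝ) 1) :
    ∃ a : Fin m, t ∈ Set.Ico ((a : ℝ) / m) ((a + 1) / m) := by
  have hm' : (0 : ℝ) < m := by exact_mod_cast hm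
  refine ⟨⟨⌊t * m⌋₊, ?_⟩, (mem_Ico_div_iff_floor_eq hm ht.1).2 rfl⟩
  rw [Nat.floor_lt (by nlinarith [ht.1])]
  nlinarith [ht.2]

lemma gridSq_subset_unitSq (m : ℕ) (k : Fin m × Fin m) : gridSq m k ⊆ unitSq := by
  rintro x ⟨h0, h1⟩ i
  fin_cases i
  exacts [mem_Icc_of_mem_Ico_div k.1 h0, mem_Icc_of_mem_Ico_div k.2 h1]

lemma pairwise_disjoint_gridSq (m : ℕ) : Pairwise (Disjoint on gridSq m) := fun _ _ hne =>
  Set.disjoint_left.2 fun _ ⟨h0, h1⟩ ⟨h0', h1'⟩ =>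
    hne (Prod.ext (Fin.eq_of_mem_Ico_div h0 h0') (Fin.eq_of_mem_Ico_div h1 h1'))

lemma measurableSet_gridSq (m : ℕ) (k : Fin m × Fin m) : MeasurableSet (gridSq m k) :=
  (measurableSet_Ico.preimage (by fun_prop)).inter (measurableSet_Ico.preimage (by fun_prop))

lemma volume_setOf_mem_and_mem {A B : Set ℝ} (hA : MeasurableSet A) (hB : MeasurableSet B) :
    volume {x : E2 | x 0 ∈ A ∧ x 1 ∈ B} = volume A * volume B := by
  have hAB : {x : Fin 2 → ℝ | x 0 ∈ A ∧ x 1 ∈ B} = Set.univ.pi ![A, B] := by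
    ext x
    simp [Fin.forall_fin_two]
  have hpre : (MeasurableEquiv.toLp 2 (Fin 2 → ℝ)).symm ⁻¹' {x : Fin 2 → ℝ | x 0 ∈ A ∧ x 1 ∈ B}
      = {x : E2 | x 0 ∈ A ∧ x 1 ∈ B} := rfl
  rw [← hpre, (EuclideanSpace.volume_preserving_symm_measurableEquiv_toLp (Fin 2)).measure_preimage
    (hAB ▸ MeasurableSet.univ_pi fun i => by fin_cases i <;> assumption).nullMeasurableSet,
    hAB, volume_pi, Measure.pi_pi, Fin.prod_univ_two]
  rfl

lemma volume_gridSq_pos {m : ℕ} (hm : 0 < m) (k : Fin m × Fin m) : 0 < volume (gridSq m k) := by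
  have hm' : (0 : ℝ) < m := by exact_mod_cast hm
  have hlen : ∀ a : ℝ, 0 < volume (Set.Ico (a / m) ((a + 1) / m)) := fun a => by
    rw [Real.volume_Ico, ENNReal.ofReal_pos, ← sub_div]
    simp [hm']
  rw [gridSq, volume_setOf_mem_and_mem measurableSet_Ico measurableSet_Ico]
  exact ENNReal.mul_pos (hlen _).ne' (hlen _).ne'

lemma unitSq_ae_eq_iUnion_gridSq {m : ℕ} (hm : 0 < m) :
    unitSq =ᵐ[volume] ⋃ k, gridSq m k := by
  have hsub : unitSq \ ⋃ k, gridSq m k ⊆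
      {x : E2 | x 0 ∈ ({1} : Set ℝ) ∧ x 1 ∈ Set.univ} ∪
        {x : E2 | x 0 ∈ Set.univ ∧ x 1 ∈ ({1} : Set ℝ)} := by
    rintro x ⟨hx, hnx⟩
    by_contra hc
    simp only [Set.mem_union, Set.mem_ofPred_eq, Set.mem_singleton_iff, Set.mem_univ, and_true,
      true_and, not_or] at hc
    obtain ⟨a, ha⟩ := exists_fin_mem_Ico_div hm ⟨(hx 0).1, (hx 0).2.lt_of_ne hc.1⟩
    obtain ⟨b, hb⟩ := exists_fin_mem_Ico_div hm ⟨(hx 1).1, (hx 1).2.lt_of_ne hc.2⟩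
    exact hnx (Set.mem_iUnion.2 ⟨(a, b), ha, hb⟩)
  refine ae_eq_set.2 ⟨measure_mono_null hsub (measure_union_null ?_ ?_), ?_⟩
  · rw [volume_setOf_mem_and_mem (measurableSet_singleton 1) .univ, Real.volume_singleton,
      zero_mul]
  · rw [volume_setOf_mem_and_mem .univ (measurableSet_singleton 1), Real.volume_singleton,
      mul_zero]
  · rw [Set.sdiff_eq_empty.2 (Set.iUnion_subset (gridSq_subset_unitSq m)), measure_empty]

end Grid

/-- For a bounded strictly positive probability density `ρ` on the unit square
and the grid of `m²` squares `Q_k` with masses `p_k = ∫_{Q_k} ρ`, the random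
density `f^m = Σ_k (R_k/(p_k N)) ρ 1_{Q_k}`, built from the counts `R_k` of `N`
i.i.d. sample points in the squares, satisfies
`E_μ[∫_Q (f^m − ρ)²] ≤ ‖ρ‖_∞ m²/N`. -/
theorem piecewise_density_L2_estimate
    (ρ : E2 → ℝ) (M : ℝ) (hbound : ∀ x ∈ unitSq, ρ x ≤ M)
    (hpos : ∀ x ∈ unitSq, 0 < ρ x)
    (hint : ∫ x in unitSq, ρ x = 1)
    (μ : Measure E2)
    (hμ : μ = (volume.restrict unitSq).withDensity fun x => ENNReal.ofReal (ρ x))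
    (hprob : IsProbabilityMeasure μ)
    (m N : ℕ) (hm : 0 < m) (hN : 0 < N)
    (p : Fin m × Fin m → ℝ) (hp : p = fun k => ∫ x in gridSq m k, ρ x) :
    ∫ ω : Fin N → E2,
        (∫ x in unitSq,
          ((∑ k : Fin m × Fin m,
              ((Finset.univ.filter fun i => ω i ∈ gridSq m k).card : ℝ) /
                  (p k * N) * (gridSq m k).indicator ρ x) - ρ x) ^ 2)
      ∂(Measure.pi fun _ => μ) ≤ M * m ^ 2 / N := by
  have := hprob
  have hρ : IntegrableOn ρ unitSq := integrable_of_integral_eq_one hint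
  have hQ := gridSq_subset_unitSq m
  have hρk : ∀ k, IntegrableOn ρ (gridSq m k) := fun k => hρ.mono_set (hQ k)
  have hρ0 : ∀ k, ∀ x ∈ gridSq m k, 0 ≤ ρ x := fun k x hx => (hpos x (hQ k hx)).le
  have hρM : ∀ k, ∀ x ∈ gridSq m k, ρ x ≤ M := fun k x hx => hbound x (hQ k hx)
  have hmass : ∀ k, μ.real (gridSq m k) = ∫ x in gridSq m k, ρ x := fun k => by
    rw [hμ]
    exact measureReal_withDensity_ofReal_of_subset (measurableSet_gridSq m k) (hQ k) (hρk k) (hρ0 k)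
  obtain rfl : p = fun k => μ.real (gridSq m k) := hp.trans (funext fun k => (hmass k).symm)
  refine (integral_congr_ae (ae_of_all _ fun ω => setIntegral_sq_sum_mul_indicator_sub
    (measurableSet_gridSq m) (pairwise_disjoint_gridSq m) (unitSq_ae_eq_iUnion_gridSq hm)
    (fun k => integrableOn_sq_of_le (measurableSet_gridSq m k) (hρk k) (hρ0 k) (hρM k))
    fun k => (sampleCount (gridSq m k) ω : ℝ) / (μ.real (gridSq m k) * N))).trans_le ?_
  refine (integral_sum_sq_sampleCount_div_sub_one_mul_le (measurableSet_gridSq m)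
    (fun k => hmass k ▸ setIntegral_pos_of_pos (measurableSet_gridSq m k) (volume_gridSq_pos hm k)
      (hρk k) fun x hx => hpos x (hQ k hx))
    (fun k => setIntegral_nonneg (measurableSet_gridSq m k) fun x _ => sq_nonneg (ρ x))
    (fun k => hmass k ▸ setIntegral_sq_le_mul (measurableSet_gridSq m k) (hρk k) (hρ0 k) (hρM k))
    hN).trans_eq ?_
  simp [mul_comm, sq]
end
end
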